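/- arXiv:1612.04900 — 2 statements merged into one kernel-verified Lean document; each statement's English description precedes it below -/
import Mathlib

section
/- Work in the formal power series ring over ℚ in the variables t, z_a (a ∈ ℙ) and x_{ab} (a,b ∈ ℙ). Let D = Σ_{w∈ℙ^*} t^{|w|} z̄^w ∏_{i<j} x_{ji}^{ji(w)}, where ji(w) is the number of positions s with w_s = j and w_{s+1} = i (so each descent of w contributes the factor x indexed by its descent pair). For a finite nonempty S ⊆ ℙ put DXZ(S) = z_a if S = {a}, and DXZ(S) = z_{j_1}⋯z_{j_k} ∏_{i=1}^{k−1}(x_{j_{i+1} j_i} − 1) if S = {j_1 < ⋯ < j_k} with k ≥ 2. Then D · (1 − Σ_{n≥1} t^n Σ_{S⊆ℙ, |S|=n} DXZ(S)) = 1; that is, D = 1/(1 − Σ_{n≥1} t^n Σ_{S⊆ℙ, |S|=n} DXZ(S)). -/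
noncomputable section

/-- The variables: `t`, the `z_a` for `a ∈ ℙ`, and the `x_{a b}` for `a, b ∈ ℙ`. -/
inductive Var : Type
  | t : Var
  | z : ℕ+ → Var
  | x : ℕ+ → ℕ+ → Var
  deriving DecidableEq

/-- The ring of formal power series over `ℚ` in the variables `t`, `z_a`, `x_{a b}`. -/
abbrev PS : Type := MvPowerSeries Var ℚ

instance : TopologicalSpace PS := Pi.topologicalSpace

def tt : PS := MvPowerSeries.X Var.t
def zz (a : ℕ+) : PS := MvPowerSeries.X (Var.z a)
def xx (a b : ℕ+) : PS := MvPowerSeries.X (Var.x a b)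

/-- `z̄^w = z_{w_1} ⋯ z_{w_n}`. -/
def zbar (w : List ℕ+) : PS := (w.map zz).prod

/-- `∏_{i<j} x_{ji}^{ji(w)}`: one factor `x_{w_s w_{s+1}}` for every descent position `s` of `w`. -/
def descFactor (w : List ℕ+) : PS :=
  ((w.zip w.tail).map fun p => if p.2 < p.1 then xx p.1 p.2 else 1).prod

/-- `DXZ(S)`: for `S = {j_1 < ⋯ < j_k}` this is
`z_{j_1} ⋯ z_{j_k} ∏_{i=1}^{k-1} (x_{j_{i+1} j_i} - 1)` (so just `z_j` when `S = {j}`). -/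
def DXZ (S : Finset ℕ+) : PS :=
  (∏ a ∈ S, zz a) *
    (((S.sort (· ≤ ·)).zip (S.sort (· ≤ ·)).tail).map fun p => xx p.2 p.1 - 1).prod

/-!
Cut a nonempty word `u` as `u = w ++ v` with `v` a nonempty strictly decreasing suffix. Such a
`v` is the decreasing sort of a nonempty set `S`, and the product of the term of `w` in `D` with
`t^{|S|} DXZ(S)` is `t^{|u|} z̄^u` times the descent weight of `w` times `∏ (x_{ab} - 1)` over the
adjacent pairs `ab` of `v`. Summed over all such cuts of `u` these weights telescope to the descent
weight of `u` (`adjProd_ite_eq_sum_chainSuffixStarts`), so `D · Σ_S t^{|S|} DXZ(S) = D - 1`.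
All sums converge in the product topology since a fixed monomial occurs in the terms of only
finitely many words and sets.
-/

open Finset

section AdjProd

variable {α M : Type*} [CommMonoid M]

def adjProd (f : α → α → M) (l : List α) : M := ((l.zip l.tail).map fun p => f p.1 p.2).prod

variable (f : α → α → M)

@[simp] lemma adjProd_nil : adjProd f [] = 1 := rfl

@[simp] lemma adjProd_singleton (a : α) : adjProd f [a] = 1 := rfl

@[simp] lemma adjProd_cons_cons (a b : α) (l : List α) :
    adjProd f (a :: b :: l) = f a b * adjProd f (b :: l) := by
  simp [adjProd]

lemma adjProd_append_cons (l₁ l₂ : List α) (b : α) :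
    adjProd f (l₁ ++ b :: l₂) = adjProd f (l₁ ++ [b]) * adjProd f (b :: l₂) := by
  induction l₁ with
  | nil => simp
  | cons a l₁ ih =>
    cases l₁ with
    | nil => simp
    | cons c l₁ =>
      simp only [List.cons_append] at ih ⊢
      rw [adjProd_cons_cons, adjProd_cons_cons, ih, mul_assoc]

lemma adjProd_reverse (l : List α) : adjProd f l.reverse = adjProd (fun a b => f b a) l := by
  induction l with
  | nil => rfl
  | cons a l ih =>
    cases l with
    | nil => rfl
    | cons b l =>
      rw [List.reverse_cons, List.reverse_cons, List.append_assoc, List.singleton_append,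
        adjProd_append_cons, ← List.reverse_cons, ih, adjProd_cons_cons, adjProd_cons_cons,
        adjProd_singleton, mul_one, mul_comm]

end AdjProd

section Telescoping

variable {α R : Type*} [CommRing R] (r : α → α → Prop) [DecidableRel r] (x : α → α → R)

def chainSuffixStarts (l : List α) : Finset ℕ :=
  {j ∈ range l.length | (l.drop j).IsChain r}

lemma mem_chainSuffixStarts {l : List α} {j : ℕ} :
    j ∈ chainSuffixStarts r l ↔ j < l.length ∧ (l.drop j).IsChain r := by
  simp [chainSuffixStarts]

lemma drop_ne_nil_of_mem_chainSuffixStarts {l : List α} {j : ℕ}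
    (hj : j ∈ chainSuffixStarts r l) : l.drop j ≠ [] := by
  simpa using ((mem_chainSuffixStarts r).mp hj).1

theorem adjProd_ite_eq_sum_chainSuffixStarts {l : List α} (hl : l ≠ []) :
    adjProd (fun a b => if r a b then x a b else 1) l =
      ∑ j ∈ chainSuffixStarts r l, adjProd (fun a b => if r a b then x a b else 1) (l.take j) *
        adjProd (fun a b => x a b - 1) (l.drop j) := by
  rw [chainSuffixStarts, sum_filter]
  induction l with
  | nil => exact absurd rfl hl
  | cons a l ih =>
    cases l with
    | nil => simp
    | cons b l =>
      specialize ih (List.cons_ne_nil b l)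
      rw [List.length_cons, sum_range_succ'] at ih
      rw [List.length_cons, sum_range_succ', List.length_cons, sum_range_succ']
      simp only [List.drop_succ_cons, List.take_succ_cons, List.drop_zero, List.take_zero,
        adjProd_cons_cons, adjProd_nil, adjProd_singleton, List.isChain_cons_cons] at ih ⊢
      rw [ih, mul_add, mul_sum]
      by_cases hab : r a b <;> by_cases hc : (b :: l).IsChain r <;>
        simp [hab, hc, mul_assoc, add_assoc, sub_mul]

end Telescoping

instance : IsTopologicalRing PS := MvPowerSeries.WithPiTopology.instIsTopologicalRing Var ℚ
instance : T3Space PS := inferInstanceAs (T3Space ((Var →₀ ℕ) → ℚ))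

namespace MvPowerSeries

open scoped WithPiTopology

variable {σ R ι κ : Type*}

theorem summable_of_finite_coeff_ne_zero [Semiring R] [TopologicalSpace R]
    {f : ι → MvPowerSeries σ R} (hf : ∀ d, {i | coeff d (f i) ≠ 0}.Finite) : Summable f :=
  WithPiTopology.summable_iff_summable_coeff.mpr fun d => summable_of_hasFiniteSupport (hf d)

theorem finite_coeff_mul_ne_zero [Semiring R] {f : ι → MvPowerSeries σ R}
    {g : κ → MvPowerSeries σ R} (hf : ∀ d, {i | coeff d (f i) ≠ 0}.Finite)
    (hg : ∀ d, {j | coeff d (g j) ≠ 0}.Finite) (d : σ →₀ ℕ) :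
    {p : ι × κ | coeff d (f p.1 * g p.2) ≠ 0}.Finite := by
  classical
  refine ((antidiagonal d).finite_toSet.biUnion fun q _ => (hf q.1).prod (hg q.2)).subset ?_
  intro p (hp : coeff d (f p.1 * g p.2) ≠ 0)
  rw [coeff_mul] at hp
  obtain ⟨q, hq, hne⟩ := exists_ne_zero_of_sum_ne_zero hp
  exact Set.mem_biUnion hq ⟨left_ne_zero_of_mul hne, right_ne_zero_of_mul hne⟩

theorem le_of_X_pow_dvd_of_coeff_ne_zero [Semiring R] {s : σ} {n : ℕ} {φ : MvPowerSeries σ R}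
    {d : σ →₀ ℕ} (h : X s ^ n ∣ φ) (hd : coeff d φ ≠ 0) : n ≤ d s :=
  not_lt.mp fun hlt => hd (X_pow_dvd_iff.mp h d hlt)

end MvPowerSeries

lemma Set.Finite.lists_length_le {α : Type*} {A : Set α} (hA : A.Finite) (n : ℕ) :
    {l : List α | l.length ≤ n ∧ ∀ a ∈ l, a ∈ A}.Finite := by
  have := hA.to_subtype
  refine ((List.finite_length_le A n).image (List.map Subtype.val)).subset ?_
  rintro l ⟨hlen, hmem⟩
  exact ⟨l.attachWith (· ∈ A) hmem, by simpa using hlen, List.attachWith_map_subtype_val hmem⟩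

open MvPowerSeries

def descSort (S : Finset ℕ+) : List ℕ+ := (S.sort (· ≤ ·)).reverse

lemma length_descSort (S : Finset ℕ+) : (descSort S).length = S.card := by
  simp [descSort]

lemma descSort_ne_nil {S : Finset ℕ+} (hS : S.Nonempty) : descSort S ≠ [] := by
  rw [← List.length_pos_iff, length_descSort]
  exact hS.card_pos

lemma toFinset_descSort (S : Finset ℕ+) : (descSort S).toFinset = S := by
  rw [descSort, List.toFinset_reverse, Finset.sort_toFinset]

lemma isChain_descSort (S : Finset ℕ+) : (descSort S).IsChain (· > ·) :=
  List.isChain_reverse.mpr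
    (List.isChain_iff_pairwise.mpr (List.sortedLT_iff_pairwise.mp (Finset.sortedLT_sort S)))

lemma descSort_toFinset {v : List ℕ+} (hv : v.IsChain (· > ·)) : descSort v.toFinset = v := by
  have hpw : v.Pairwise (· > ·) := List.isChain_iff_pairwise.mp hv
  have hsort : v.reverse.toFinset.sort (· ≤ ·) = v.reverse :=
    (List.toFinset_sort _ (List.nodup_reverse.mpr (hpw.imp ne_of_gt))).mpr
      (List.pairwise_reverse.mpr (hpw.imp le_of_lt))
  rw [descSort, ← List.toFinset_reverse, hsort, List.reverse_reverse]

lemma zbar_append (v w : List ℕ+) : zbar (v ++ w) = zbar v * zbar w := by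
  simp [zbar]

lemma zbar_descSort (S : Finset ℕ+) : zbar (descSort S) = ∏ a ∈ S, zz a := by
  rw [zbar, descSort, List.map_reverse, List.prod_reverse, Finset.prod_eq_multiset_prod,
    ← Finset.sort_eq S (· ≤ ·), Multiset.map_coe, Multiset.prod_coe]

lemma descFactor_eq_adjProd (w : List ℕ+) :
    descFactor w = adjProd (fun a b => if a > b then xx a b else 1) w := rfl

lemma DXZ_eq (S : Finset ℕ+) :
    DXZ S = zbar (descSort S) * adjProd (fun a b => xx a b - 1) (descSort S) := by
  rw [zbar_descSort, descSort, adjProd_reverse]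
  rfl

def wordTerm (w : List ℕ+) : PS := tt ^ w.length * zbar w * descFactor w

def blockTerm (S : Finset ℕ+) : PS := tt ^ S.card * DXZ S

lemma finite_setOf_coeff_z_ne_zero (d : Var →₀ ℕ) : {a : ℕ+ | d (Var.z a) ≠ 0}.Finite :=
  (d.support.finite_toSet.preimage fun _ _ _ _ h => Var.z.inj h).subset fun _ ha =>
    Finsupp.mem_support_iff.mpr ha

lemma finite_coeff_wordTerm_ne_zero (d : Var →₀ ℕ) :
    {w : List ℕ+ | coeff d (wordTerm w) ≠ 0}.Finite := by
  refine ((finite_setOf_coeff_z_ne_zero d).lists_length_le (d Var.t)).subset ?_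
  intro w (hw : coeff d (wordTerm w) ≠ 0)
  refine ⟨le_of_X_pow_dvd_of_coeff_ne_zero ?_ hw, fun a ha => ?_⟩
  · exact (dvd_mul_right _ _).mul_right _
  · have hdvd : X (Var.z a) ^ 1 ∣ wordTerm w := by
      rw [pow_one]
      exact ((List.dvd_prod (List.mem_map_of_mem (f := zz) ha)).mul_left _).mul_right _
    exact Nat.one_le_iff_ne_zero.mp (le_of_X_pow_dvd_of_coeff_ne_zero hdvd hw)

lemma finite_coeff_blockTerm_ne_zero (d : Var →₀ ℕ) :
    {S : {S : Finset ℕ+ // S.Nonempty} | coeff d (blockTerm S.1) ≠ 0}.Finite := by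
  refine (((finite_setOf_coeff_z_ne_zero d).finite_subsets.preimage
    Finset.coe_injective.injOn).preimage Subtype.val_injective.injOn).subset ?_
  intro S (hS : coeff d (blockTerm S.1) ≠ 0) a ha
  have hdvd : X (Var.z a) ^ 1 ∣ blockTerm S.1 := by
    rw [pow_one]
    exact (Finset.dvd_prod_of_mem zz ha).mul_right _ |>.mul_left _
  exact Nat.one_le_iff_ne_zero.mp (le_of_X_pow_dvd_of_coeff_ne_zero hdvd hS)

def appendDescSort (p : List ℕ+ × {S : Finset ℕ+ // S.Nonempty}) : List ℕ+ :=
  p.1 ++ descSort p.2.1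

lemma wordTerm_mul_blockTerm (w : List ℕ+) (S : Finset ℕ+) :
    wordTerm w * blockTerm S = tt ^ (w ++ descSort S).length * zbar (w ++ descSort S) *
      (descFactor w * adjProd (fun a b => xx a b - 1) (descSort S)) := by
  rw [wordTerm, blockTerm, DXZ_eq, List.length_append, length_descSort, zbar_append, pow_add]
  ring

def splitEquiv (u : List ℕ+) :
    chainSuffixStarts (· > ·) u ≃
      {p : List ℕ+ × {S : Finset ℕ+ // S.Nonempty} // appendDescSort p = u} where
  toFun j := ⟨(u.take j, ⟨(u.drop j).toFinset,
      List.toFinset_nonempty_iff _ |>.mpr (drop_ne_nil_of_mem_chainSuffixStarts _ j.2)⟩), by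
    rw [appendDescSort, descSort_toFinset ((mem_chainSuffixStarts _).mp j.2).2,
      List.take_append_drop]⟩
  invFun p := ⟨p.1.1.length, by
    obtain ⟨⟨w, S, hS⟩, rfl⟩ := p
    change w.length ∈ chainSuffixStarts _ (w ++ descSort S)
    rw [mem_chainSuffixStarts, List.drop_left, List.length_append]
    exact ⟨Nat.lt_add_of_pos_right (List.length_pos_iff.mpr (descSort_ne_nil hS)),
      isChain_descSort S⟩⟩
  left_inv j := Subtype.ext (List.length_take_of_le ((mem_chainSuffixStarts _).mp j.2).1.le)
  right_inv := by
    rintro ⟨⟨w, S⟩, hp⟩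
    obtain rfl : w ++ descSort S.1 = u := hp
    ext1
    simp [toFinset_descSort]

lemma hasSum_fiber_appendDescSort (u : List ℕ+) :
    HasSum (fun c : {p // appendDescSort p = u} => wordTerm c.1.1 * blockTerm c.1.2.1)
      (wordTerm u - if u = [] then 1 else 0) := by
  rcases eq_or_ne u [] with rfl | hu
  · have : IsEmpty {p // appendDescSort p = []} :=
      ⟨fun ⟨p, hp⟩ => descSort_ne_nil p.2.2 (List.append_eq_nil_iff.mp hp).2⟩
    simp [wordTerm, zbar, descFactor]
  rw [if_neg hu, sub_zero, ← (splitEquiv u).hasSum_iff]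
  convert hasSum_fintype fun j : chainSuffixStarts (· > ·) u => tt ^ u.length * zbar u *
    (descFactor (u.take j) * adjProd (fun a b => xx a b - 1) (u.drop j)) using 1
  · funext j
    change wordTerm (u.take j) * blockTerm (u.drop j).toFinset = _
    rw [wordTerm_mul_blockTerm, descSort_toFinset ((mem_chainSuffixStarts _).mp j.2).2,
      List.take_append_drop]
  · rw [sum_coe_sort _ fun j => tt ^ u.length * zbar u *
      (descFactor (u.take j) * adjProd (fun a b => xx a b - 1) (u.drop j)), ← mul_sum, wordTerm,
      descFactor_eq_adjProd, adjProd_ite_eq_sum_chainSuffixStarts _ _ hu]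
    rfl

lemma summable_wordTerm : Summable wordTerm :=
  summable_of_finite_coeff_ne_zero finite_coeff_wordTerm_ne_zero

lemma summable_blockTerm : Summable fun S : {S : Finset ℕ+ // S.Nonempty} => blockTerm S.1 :=
  summable_of_finite_coeff_ne_zero finite_coeff_blockTerm_ne_zero

lemma summable_wordTerm_mul_blockTerm :
    Summable fun p : List ℕ+ × {S : Finset ℕ+ // S.Nonempty} => wordTerm p.1 * blockTerm p.2.1 :=
  summable_of_finite_coeff_ne_zero
    (finite_coeff_mul_ne_zero finite_coeff_wordTerm_ne_zero finite_coeff_blockTerm_ne_zero)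

lemma hasSum_wordTerm_mul_blockTerm :
    HasSum (fun p : List ℕ+ × {S : Finset ℕ+ // S.Nonempty} => wordTerm p.1 * blockTerm p.2.1)
      ((∑' w, wordTerm w) - 1) := by
  have hfib := ((Equiv.sigmaFiberEquiv appendDescSort).hasSum_iff.mpr
    summable_wordTerm_mul_blockTerm.hasSum).sigma hasSum_fiber_appendDescSort
  rw [(summable_wordTerm.hasSum.sub (hasSum_ite_eq [] 1)).unique hfib]
  exact summable_wordTerm_mul_blockTerm.hasSum

/-- Theorem 1 (labeled descents):
`D ⋅ (1 - Σ_{n≥1} t^n Σ_{S ⊆ ℙ, |S| = n} DXZ(S)) = 1`, where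
`D = Σ_{w ∈ ℙ^*} t^{|w|} z̄^w ∏_{i<j} x_{ji}^{ji(w)}`. -/
theorem labeled_descents :
    (∑' w : List ℕ+, tt ^ w.length * zbar w * descFactor w) *
      (1 - ∑' S : {S : Finset ℕ+ // S.Nonempty}, tt ^ S.1.card * DXZ S.1) = 1 := by
  have hDG : (∑' w, wordTerm w) * ∑' S : {S : Finset ℕ+ // S.Nonempty}, blockTerm S.1
      = (∑' w, wordTerm w) - 1 :=
    summable_wordTerm.hasSum.mul_eq summable_blockTerm.hasSum hasSum_wordTerm_mul_blockTerm
  change (∑' w, wordTerm w) * (1 - ∑' S : {S : Finset ℕ+ // S.Nonempty}, blockTerm S.1) = 1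
  rw [mul_sub, mul_one, hDG, sub_sub_cancel]
end
end

section
/- Work in the formal power series ring over ℚ in the variables t, z_a (a ∈ ℙ) and x_{ab} (a,b ∈ ℙ). Let WD = Σ_{w∈ℙ^*} t^{|w|} z̄^w ∏_{i≤j} x_{ji}^{ji(w)}, where ji(w) is the number of positions s with w_s = j and w_{s+1} = i (so each weak descent of w contributes the factor x indexed by its weak-descent pair). For a nonempty weakly decreasing word v = j_1 ≥ j_2 ≥ ⋯ ≥ j_k put WDXZ(v) = z_{j_1} if k = 1, and WDXZ(v) = z_{j_1}⋯z_{j_k} ∏_{i=1}^{k−1}(x_{j_i j_{i+1}} − 1) if k ≥ 2. Then WD = 1/(1 − Σ_{n≥1} t^n Σ_{v weakly decreasing, |v|=n} WDXZ(v)), i.e. WD · (1 − Σ_{n≥1} t^n Σ_{v weakly decreasing, |v|=n} WDXZ(v)) = 1. -/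
noncomputable section

/-- `∏_{i≤j} x_{ji}^{ji(w)}`: one factor `x_{w_s w_{s+1}}` for every weak-descent position `s`. -/
def wdescFactor (w : List ℕ+) : PS :=
  ((w.zip w.tail).map fun p => if p.2 ≤ p.1 then xx p.1 p.2 else 1).prod

/-- `WDXZ(v)` for a nonempty weakly decreasing word `v = j_1 ≥ ⋯ ≥ j_k`:
`z_{j_1} ⋯ z_{j_k} ∏_{i=1}^{k-1} (x_{j_i j_{i+1}} - 1)` (so just `z_{j_1}` when `k = 1`). -/
def WDXZ (v : List ℕ+) : PS :=
  zbar v * ((v.zip v.tail).map fun p => xx p.1 p.2 - 1).prod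

/-!
Write `A(w)` for the term of `WD` indexed by the word `w` and `S(v)` for the term `t^|v| WDXZ(v)`.
For a nonempty word `u`, summing `S(v) A(w)` over the factorisations `u = v w` with `v` nonempty and
weakly decreasing gives `A(u)`: peeling off the first letter `c` of `u`, the factorisation with
`v = c` contributes `t z_c A(u')`, and when the next letter `c'` is at most `c` the remaining ones
contribute `t z_c (x_{c c'} - 1) A(u')` by induction, so the two add up to `A(u)` whether or not
`c c'` is a weak descent. Hence `(Σ S) · WD = WD - 1`, which is the theorem.
-/

open MvPowerSeries

open scoped MvPowerSeries.WithPiTopology in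
theorem MvPowerSeries.summable_of_finite_support_coeff {σ R ι : Type*} [Semiring R]
    [TopologicalSpace R] {f : ι → MvPowerSeries σ R}
    (h : ∀ d, (Function.support fun i => coeff d (f i)).Finite) : Summable f :=
  WithPiTopology.summable_iff_summable_coeff.mpr fun d => summable_of_hasFiniteSupport (h d)

namespace LabeledWeakDescents

instance : T3Space PS := inferInstanceAs (T3Space ((Var →₀ ℕ) → ℚ))

instance : IsTopologicalRing PS := WithPiTopology.instIsTopologicalRing Var ℚ

def wordMonomial (w : List ℕ+) : PS := tt ^ w.length * zbar w

theorem wordMonomial_append (v w : List ℕ+) :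
    wordMonomial (v ++ w) = wordMonomial v * wordMonomial w := by
  simp only [wordMonomial, zbar, List.length_append, pow_add, List.map_append, List.prod_append]
  ring

theorem length_le_of_wordMonomial_dvd {w : List ℕ+} {φ : PS} {d : Var →₀ ℕ}
    (hw : wordMonomial w ∣ φ) (hd : coeff d φ ≠ 0) : w.length ≤ d Var.t := by
  by_contra! hlt
  exact hd (X_pow_dvd_iff.mp ((dvd_mul_right _ _).trans hw) d hlt)

theorem ne_zero_of_wordMonomial_dvd {w : List ℕ+} {φ : PS} {d : Var →₀ ℕ}
    (hw : wordMonomial w ∣ φ) (hd : coeff d φ ≠ 0) {c : ℕ+} (hc : c ∈ w) : d (Var.z c) ≠ 0 := by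
  have hzc : zz c ∣ φ :=
    ((List.dvd_prod (List.mem_map_of_mem hc)).trans (dvd_mul_left _ _)).trans hw
  exact fun h0 => hd (X_dvd_iff.mp hzc d h0)

theorem finite_setOf_wordMonomial_dvd (d : Var →₀ ℕ) :
    {w | ∃ φ : PS, wordMonomial w ∣ φ ∧ coeff d φ ≠ 0}.Finite := by
  set S : Set ℕ+ := {c | d (Var.z c) ≠ 0}
  have hS : S.Finite :=
    (d.support.finite_toSet.preimage fun a _ b _ h => Var.z.inj h).subset
      fun c hc => Finsupp.mem_support_iff.mpr hc
  have : Finite S := hS.to_subtype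
  refine ((List.finite_length_le S (d Var.t)).image (List.map Subtype.val)).subset ?_
  rintro w ⟨φ, hw, hd⟩
  lift w to List S using fun c hc => ne_zero_of_wordMonomial_dvd hw hd hc
  exact ⟨w, by simpa using length_le_of_wordMonomial_dvd hw hd, rfl⟩

theorem summable_of_wordMonomial_dvd {ι : Type*} {f : ι → PS} {g : ι → List ℕ+}
    (hg : ∀ u, (g ⁻¹' {u}).Finite) (hdvd : ∀ i, wordMonomial (g i) ∣ f i) : Summable f :=
  summable_of_finite_support_coeff fun d =>
    ((finite_setOf_wordMonomial_dvd d).preimage' fun u _ => hg u).subset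
      fun i hi => ⟨f i, hdvd i, hi⟩

def weight (w : List ℕ+) : PS := tt ^ w.length * zbar w * wdescFactor w

def decWeight (v : List ℕ+) : PS := tt ^ v.length * WDXZ v

theorem wordMonomial_dvd_weight (w : List ℕ+) : wordMonomial w ∣ weight w :=
  dvd_mul_right _ _

theorem wordMonomial_dvd_decWeight (v : List ℕ+) : wordMonomial v ∣ decWeight v :=
  ⟨_, (mul_assoc _ _ _).symm⟩

@[simp] theorem weight_nil : weight [] = 1 := by simp [weight, zbar, wdescFactor]

@[simp] theorem weight_singleton (c : ℕ+) : weight [c] = tt * zz c := by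
  simp [weight, zbar, wdescFactor]

theorem weight_cons_cons (c c' : ℕ+) (l : List ℕ+) :
    weight (c :: c' :: l) = tt * zz c * (if c' ≤ c then xx c c' else 1) * weight (c' :: l) := by
  simp only [weight, zbar, wdescFactor, List.length_cons, pow_succ, List.map_cons,
    List.prod_cons, List.tail_cons, List.zip_cons_cons]
  ring

@[simp] theorem decWeight_singleton (c : ℕ+) : decWeight [c] = tt * zz c := by
  simp [decWeight, WDXZ, zbar]

theorem decWeight_cons_cons (c c' : ℕ+) (l : List ℕ+) :
    decWeight (c :: c' :: l) = tt * zz c * (xx c c' - 1) * decWeight (c' :: l) := by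
  simp only [decWeight, WDXZ, zbar, List.length_cons, pow_succ, List.map_cons, List.prod_cons,
    List.tail_cons, List.zip_cons_cons]
  ring

abbrev DecWord : Type := {v : List ℕ+ // v ≠ [] ∧ v.IsChain fun a b => b ≤ a}

open Classical in
def decPrefixLengths (u : List ℕ+) : Finset ℕ :=
  (Finset.Icc 1 u.length).filter fun m => (u.take m).IsChain fun a b => b ≤ a

theorem mem_decPrefixLengths {u : List ℕ+} {m : ℕ} :
    m ∈ decPrefixLengths u ↔ 1 ≤ m ∧ m ≤ u.length ∧ (u.take m).IsChain fun a b => b ≤ a := by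
  simp [decPrefixLengths, and_assoc]

theorem decPrefixLengths_singleton (c : ℕ+) : decPrefixLengths [c] = {1} := by
  ext (_ | _ | m) <;> simp [mem_decPrefixLengths]

theorem decPrefixLengths_cons_cons_of_le {c c' : ℕ+} (l : List ℕ+) (h : c' ≤ c) :
    decPrefixLengths (c :: c' :: l) =
      insert 1 ((decPrefixLengths (c' :: l)).map (addRightEmbedding 1)) := by
  ext (_ | _ | m) <;> simp [mem_decPrefixLengths, List.take_succ_cons, List.isChain_cons_cons, h]

theorem decPrefixLengths_cons_cons_of_lt {c c' : ℕ+} (l : List ℕ+) (h : c < c') :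
    decPrefixLengths (c :: c' :: l) = {1} := by
  ext (_ | _ | m) <;> simp [mem_decPrefixLengths, List.take_succ_cons, List.isChain_cons_cons, h]

theorem sum_decPrefixLengths_decWeight_mul_weight {u : List ℕ+} (hu : u ≠ []) :
    ∑ m ∈ decPrefixLengths u, decWeight (u.take m) * weight (u.drop m) = weight u := by
  induction u with
  | nil => contradiction
  | cons c w ih =>
    rcases w with _ | ⟨c', l⟩
    · simp [decPrefixLengths_singleton]
    rcases le_or_gt c' c with hc | hc
    · have hshift : ∀ m ∈ decPrefixLengths (c' :: l),
          decWeight ((c :: c' :: l).take (m + 1)) * weight ((c :: c' :: l).drop (m + 1)) =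
            tt * zz c * (xx c c' - 1) *
              (decWeight ((c' :: l).take m) * weight ((c' :: l).drop m)) := by
        intro m hm
        obtain ⟨k, rfl⟩ := Nat.exists_eq_add_of_le' (mem_decPrefixLengths.mp hm).1
        rw [List.take_succ_cons, List.drop_succ_cons, List.take_succ_cons, decWeight_cons_cons,
          mul_assoc]
      have h1 : 1 ∉ (decPrefixLengths (c' :: l)).map (addRightEmbedding 1) := by
        simp [mem_decPrefixLengths]
      rw [decPrefixLengths_cons_cons_of_le l hc, Finset.sum_insert h1, Finset.sum_map]
      simp only [addRightEmbedding_apply]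
      rw [Finset.sum_congr rfl hshift, ← Finset.mul_sum, ih (List.cons_ne_nil _ _),
        weight_cons_cons, if_pos hc]
      simp only [List.take_succ_cons, List.take_zero, List.drop_succ_cons, List.drop_zero,
        decWeight_singleton]
      ring
    · rw [decPrefixLengths_cons_cons_of_lt l hc, Finset.sum_singleton, weight_cons_cons,
        if_neg hc.not_ge]
      simp

abbrev Factorisation (u : List ℕ+) : Type := {p : DecWord × List ℕ+ // p.1.1 ++ p.2 = u}

/-- A factorisation `u = v ++ w` is determined by `|v|`. -/
def decPrefixLengthsEquiv (u : List ℕ+) : decPrefixLengths u ≃ Factorisation u where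
  toFun m :=
    have hm := mem_decPrefixLengths.mp m.2
    ⟨(⟨u.take m, List.ne_nil_of_length_pos (by simp; omega), hm.2.2⟩, u.drop m),
      List.take_append_drop _ _⟩
  invFun p := ⟨p.1.1.1.length, by
    obtain ⟨⟨⟨v, hv, hdec⟩, w⟩, rfl⟩ := p
    exact mem_decPrefixLengths.mpr ⟨List.length_pos_iff.mpr hv, by simp, by rwa [List.take_left]⟩⟩
  left_inv m := Subtype.ext <| by simpa using (mem_decPrefixLengths.mp m.2).2.1
  right_inv := by
    rintro ⟨⟨⟨v, hv⟩, w⟩, rfl⟩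
    simp

theorem hasSum_factorisations (u : List ℕ+) :
    HasSum (fun p : Factorisation u => decWeight p.1.1.1 * weight p.1.2)
      (Function.update weight [] 0 u) := by
  rcases eq_or_ne u [] with rfl | hu
  · have : IsEmpty (Factorisation []) :=
      ⟨fun ⟨⟨⟨v, hv, _⟩, _⟩, h⟩ => hv (List.append_eq_nil_iff.mp h).1⟩
    simp
  rw [Function.update_of_ne hu, ← sum_decPrefixLengths_decWeight_mul_weight hu]
  exact (decPrefixLengthsEquiv u).hasSum_iff.mp ((decPrefixLengths u).hasSum _)

theorem summable_weight : Summable weight :=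
  summable_of_wordMonomial_dvd (g := id) (fun u => Set.finite_singleton u) wordMonomial_dvd_weight

theorem summable_decWeight : Summable fun v : DecWord => decWeight v.1 :=
  summable_of_wordMonomial_dvd
    (fun _ => Set.Subsingleton.finite fun _ hv _ hw => Subtype.ext (hv.trans hw.symm))
    fun v => wordMonomial_dvd_decWeight v.1

theorem summable_decWeight_mul_weight :
    Summable fun p : DecWord × List ℕ+ => decWeight p.1.1 * weight p.2 :=
  summable_of_wordMonomial_dvd (g := fun p => p.1.1 ++ p.2)
    (fun u => @Set.toFinite _ _ (Finite.of_equiv _ (decPrefixLengthsEquiv u)))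
    fun p => wordMonomial_append p.1.1 p.2 ▸
      mul_dvd_mul (wordMonomial_dvd_decWeight p.1.1) (wordMonomial_dvd_weight p.2)

theorem tsum_decWeight_mul_tsum_weight :
    (∑' v : DecWord, decWeight v.1) * ∑' w, weight w = (∑' w, weight w) - 1 := by
  classical
  have hprod := summable_decWeight.hasSum.mul summable_weight.hasSum summable_decWeight_mul_weight
  have hregroup : HasSum (Function.update weight [] 0) _ :=
    ((Equiv.sigmaFiberEquiv fun p : DecWord × List ℕ+ => p.1.1 ++ p.2).hasSum_iff.mpr
      hprod).sigma hasSum_factorisations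
  have hupdate := summable_weight.hasSum.update [] 0
  rw [weight_nil, zero_sub, neg_add_eq_sub] at hupdate
  exact hregroup.unique hupdate

end LabeledWeakDescents

/-- Theorem 2 (labeled weak descents):
`WD ⋅ (1 - Σ_{n≥1} t^n Σ_{v weakly decreasing, |v| = n} WDXZ(v)) = 1`, where
`WD = Σ_{w ∈ ℙ^*} t^{|w|} z̄^w ∏_{i≤j} x_{ji}^{ji(w)}`. -/
theorem labeled_weak_descents :
    (∑' w : List ℕ+, tt ^ w.length * zbar w * wdescFactor w) *
      (1 - ∑' v : {v : List ℕ+ // v ≠ [] ∧ v.Chain' fun a b => b ≤ a},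
          tt ^ v.1.length * WDXZ v.1) = 1 := by
  open LabeledWeakDescents in
  change (∑' w, weight w) * (1 - ∑' v : DecWord, decWeight v.1) = 1
  linear_combination -LabeledWeakDescents.tsum_decWeight_mul_tsum_weight
end
end
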